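/- The minimal number m of nodes for which there exist points ξ¹,…,ξᵐ ∈ [-1,1] and real weights λ₁,…,λₘ such that ∫ f² dμ = Σⱼ λⱼ f(ξʲ)² for all f in span{f1, f2}, equals 3. -/

import Mathlib

/-! Since `f1` and `f2` are orthogonal in `L²[-1, 1]` with `‖f1‖² = 1` and
`‖f2‖² = S := a² + (A² + B²)/2`, a rule is exact on their span iff `∑ λ f1(ξ)² = 1`,
`∑ λ f1(ξ) f2(ξ) = 0` and `∑ λ f2(ξ)² = S`. Zero weights pad a rule with fewer nodes to one with two.
With two nodes, a node in `[-1, 0)`, where `f1 = 0`, forces the other to carry weight `1` and `f2 = 0`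
there; two nodes in `[0, 1]` force `S = -f2(ξ₀) f2(ξ₁)`, so `S²` is a product of two of `A², B²`,
which `A² > 2a² + B²` rules out. Three nodes suffice: `0` and `1/4` with weight `1/2` cancel the
mixed moment, and a (negative) weight at `-1` corrects the second moment of `f2`. -/

open MeasureTheory Set

noncomputable def f1 : ℝ → ℝ := fun x => if x < 0 then 0 else 1

noncomputable def f2 (a A B : ℝ) : ℝ → ℝ := fun x =>
  if x < 0 then a
  else if x < 1/4 then A
  else if x < 1/2 then -A
  else if x < 3/4 then B
  else -B

section Piecewise

variable {g : ℝ → ℝ} {s t c : ℝ}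

lemma intervalIntegrable_of_eqOn_Ioo (hst : s ≤ t) (hg : EqOn g (fun _ => c) (Ioo s t)) :
    IntervalIntegrable g volume s t :=
  intervalIntegrable_const.congr_uIoo (by rw [uIoo_of_le hst]; exact hg.symm)

lemma integral_of_eqOn_Ioo (hst : s ≤ t) (hg : EqOn g (fun _ => c) (Ioo s t)) :
    ∫ x in s..t, g x = (t - s) * c := by
  rw [intervalIntegral.integral_congr_Ioo_of_le hst hg, intervalIntegral.integral_const,
    smul_eq_mul]

end Piecewise

section Values

variable {a A B x : ℝ}

lemma f1_of_neg (hx : x < 0) : f1 x = 0 := if_pos hx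

lemma f1_of_nonneg (hx : 0 ≤ x) : f1 x = 1 := if_neg hx.not_gt

lemma f2_of_neg (hx : x < 0) : f2 a A B x = a := if_pos hx

lemma f2_sq_of_nonneg (hx : 0 ≤ x) : f2 a A B x ^ 2 = A ^ 2 ∨ f2 a A B x ^ 2 = B ^ 2 := by
  rw [f2, if_neg hx.not_gt]
  split_ifs <;> simp

end Values

lemma integral_sq_f1_add_f2 (a A B c₁ c₂ : ℝ) :
    ∫ x in (-1:ℝ)..1, (c₁ * f1 x + c₂ * f2 a A B x) ^ 2
      = c₁ ^ 2 + c₂ ^ 2 * (a ^ 2 + (A ^ 2 + B ^ 2) / 2) := by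
  set g := fun x => (c₁ * f1 x + c₂ * f2 a A B x) ^ 2
  have piece : ∀ {s t : ℝ} (c : ℝ), s ≤ t → (∀ x, s < x → x < t → g x = c) →
      IntervalIntegrable g volume s t ∧ ∫ x in s..t, g x = (t - s) * c :=
    fun c hst hg => ⟨intervalIntegrable_of_eqOn_Ioo hst fun x hx => hg x hx.1 hx.2,
      integral_of_eqOn_Ioo hst fun x hx => hg x hx.1 hx.2⟩
  obtain ⟨i₁, e₁⟩ := piece ((c₂ * a) ^ 2) (by norm_num) fun x (_ : -1 < x) (h : x < 0) => by
    simp only [g, f1, f2, if_pos h]; ring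
  obtain ⟨i₂, e₂⟩ := piece ((c₁ + c₂ * A) ^ 2) (by norm_num)
    fun x (h₁ : 0 < x) (h₂ : x < 1/4) => by
      simp only [g, f1, f2]; split_ifs <;> first | (exfalso; linarith) | ring
  obtain ⟨i₃, e₃⟩ := piece ((c₁ - c₂ * A) ^ 2) (by norm_num)
    fun x (h₁ : 1/4 < x) (h₂ : x < 1/2) => by
      simp only [g, f1, f2]; split_ifs <;> first | (exfalso; linarith) | ring
  obtain ⟨i₄, e₄⟩ := piece ((c₁ + c₂ * B) ^ 2) (by norm_num)
    fun x (h₁ : 1/2 < x) (h₂ : x < 3/4) => by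
      simp only [g, f1, f2]; split_ifs <;> first | (exfalso; linarith) | ring
  obtain ⟨i₅, e₅⟩ := piece ((c₁ - c₂ * B) ^ 2) (by norm_num)
    fun x (h₁ : 3/4 < x) (h₂ : x < 1) => by
      simp only [g, f1, f2]; split_ifs <;> first | (exfalso; linarith) | ring
  rw [← intervalIntegral.integral_add_adjacent_intervals i₁ (i₂.trans (i₃.trans (i₄.trans i₅))),
    ← intervalIntegral.integral_add_adjacent_intervals i₂ (i₃.trans (i₄.trans i₅)),
    ← intervalIntegral.integral_add_adjacent_intervals i₃ (i₄.trans i₅),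
    ← intervalIntegral.integral_add_adjacent_intervals i₄ i₅, e₁, e₂, e₃, e₄, e₅]
  ring

section Moments

variable {ι : Type*}

lemma sum_mul_add_sq (s : Finset ι) (l u v : ι → ℝ) (c₁ c₂ : ℝ) :
    ∑ j ∈ s, l j * (c₁ * u j + c₂ * v j) ^ 2
      = c₁ ^ 2 * ∑ j ∈ s, l j * u j ^ 2 + 2 * c₁ * c₂ * ∑ j ∈ s, l j * (u j * v j)
        + c₂ ^ 2 * ∑ j ∈ s, l j * v j ^ 2 := by
  simp only [Finset.mul_sum, ← Finset.sum_add_distrib]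
  exact Finset.sum_congr rfl fun _ _ => by ring

lemma forall_sq_add_mul_sq_eq_sum_iff [Fintype ι] (l u v : ι → ℝ) (S : ℝ) :
    (∀ c₁ c₂ : ℝ, c₁ ^ 2 + c₂ ^ 2 * S = ∑ j, l j * (c₁ * u j + c₂ * v j) ^ 2) ↔
      ∑ j, l j * u j ^ 2 = 1 ∧ ∑ j, l j * (u j * v j) = 0 ∧ ∑ j, l j * v j ^ 2 = S := by
  simp only [sum_mul_add_sq]
  refine ⟨fun h => ?_, fun ⟨h₁, h₁₂, h₂⟩ c₁ c₂ => by rw [h₁, h₁₂, h₂]; ring⟩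
  have e₁ := h 1 0
  have e₂ := h 0 1
  have e₃ := h 1 1
  refine ⟨?_, ?_, ?_⟩ <;> linarith

lemma sum_two_mul_sq_eq_neg_mul {R : Type*} [CommRing R] {l₀ l₁ v₀ v₁ : R}
    (h₁ : l₀ + l₁ = 1) (h₁₂ : l₀ * v₀ + l₁ * v₁ = 0) :
    l₀ * v₀ ^ 2 + l₁ * v₁ ^ 2 = -(v₀ * v₁) := by
  linear_combination (v₀ + v₁) * h₁₂ - v₀ * v₁ * h₁

end Moments

def IsExactQuadrature (V : Set (ℝ → ℝ)) {m : ℕ} (ξ l : Fin m → ℝ) : Prop :=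
  (∀ j, ξ j ∈ Icc (-1:ℝ) 1) ∧ ∀ f ∈ V, ∫ x in (-1:ℝ)..1, f x ^ 2 = ∑ j, l j * f (ξ j) ^ 2

namespace IsExactQuadrature

variable {V : Set (ℝ → ℝ)} {m : ℕ} {ξ l : Fin m → ℝ}

lemma cons (h : IsExactQuadrature V ξ l) {x : ℝ} (hx : x ∈ Icc (-1:ℝ) 1) :
    IsExactQuadrature V (Fin.cons x ξ) (Fin.cons 0 l) :=
  ⟨Fin.cases hx h.1, fun f hf => by simp [Fin.sum_univ_succ, h.2 f hf]⟩

lemma exists_of_le {n : ℕ} (hmn : m ≤ n) (h : IsExactQuadrature V ξ l) :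
    ∃ ξ' l' : Fin n → ℝ, IsExactQuadrature V ξ' l' := by
  induction n, hmn using Nat.le_induction with
  | base => exact ⟨ξ, l, h⟩
  | succ n _ ih =>
    obtain ⟨ξ', l', h'⟩ := ih
    exact ⟨_, _, h'.cons (x := 0) (by norm_num)⟩

end IsExactQuadrature

lemma isExactQuadrature_span_iff {a A B : ℝ} {m : ℕ} (ξ l : Fin m → ℝ) :
    IsExactQuadrature (Submodule.span ℝ {f1, f2 a A B}) ξ l ↔
      (∀ j, ξ j ∈ Icc (-1:ℝ) 1) ∧ ∑ j, l j * f1 (ξ j) ^ 2 = 1 ∧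
        ∑ j, l j * (f1 (ξ j) * f2 a A B (ξ j)) = 0 ∧
        ∑ j, l j * f2 a A B (ξ j) ^ 2 = a ^ 2 + (A ^ 2 + B ^ 2) / 2 := by
  refine and_congr_right fun _ => ?_
  rw [← forall_sq_add_mul_sq_eq_sum_iff]
  simp only [SetLike.mem_coe, Submodule.mem_span_pair, forall_exists_index]
  refine ⟨fun h c₁ c₂ => ?_, fun h f c₁ c₂ hf => ?_⟩
  · simpa [integral_sq_f1_add_f2] using h _ c₁ c₂ rfl
  · subst hf
    simpa [integral_sq_f1_add_f2] using h c₁ c₂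

lemma isExactQuadrature_three {a A B : ℝ} (ha : a ≠ 0) :
    IsExactQuadrature (Submodule.span ℝ {f1, f2 a A B}) ![-1, 0, 1/4]
      ![(2 * a ^ 2 + B ^ 2 - A ^ 2) / (2 * a ^ 2), 1/2, 1/2] := by
  rw [isExactQuadrature_span_iff]
  refine ⟨fun j => by fin_cases j <;> norm_num, ?_⟩
  simp only [Fin.sum_univ_three, Matrix.cons_val_zero, Matrix.cons_val_one, Matrix.cons_val_two,
    Matrix.head_cons, Matrix.tail_cons]
  have hA : f2 a A B 0 = A ∧ f2 a A B (1/4) = -A := by norm_num [f2]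
  rw [f1_of_neg (by norm_num), f2_of_neg (by norm_num), f1_of_nonneg le_rfl,
    f1_of_nonneg (by norm_num), hA.1, hA.2]
  refine ⟨by norm_num, by ring, ?_⟩
  field_simp
  ring

lemma sq_ne_mul_of_eq_sq_or_eq_sq {a A B p q : ℝ} (hB : B ≠ 0) (hcond : A ^ 2 > 2 * a ^ 2 + B ^ 2)
    (hp : p = A ^ 2 ∨ p = B ^ 2) (hq : q = A ^ 2 ∨ q = B ^ 2) :
    (a ^ 2 + (A ^ 2 + B ^ 2) / 2) ^ 2 ≠ p * q := by
  have hB2 : 0 < B ^ 2 := by positivity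
  rcases hp with rfl | rfl <;> rcases hq with rfl | rfl <;> intro h <;>
    nlinarith [sq_nonneg a, sq_nonneg (A ^ 2 - B ^ 2)]

theorem not_isExactQuadrature_two {a A B : ℝ} (hB : B ≠ 0) (hcond : A ^ 2 > 2 * a ^ 2 + B ^ 2)
    (ξ l : Fin 2 → ℝ) : ¬ IsExactQuadrature (Submodule.span ℝ {f1, f2 a A B}) ξ l := by
  rw [isExactQuadrature_span_iff]
  rintro ⟨-, h₁, h₁₂, h₂⟩
  simp only [Fin.sum_univ_two] at h₁ h₁₂ h₂
  have f2_ne_zero : ∀ {x}, 0 ≤ x → f2 a A B x ≠ 0 := fun hx h0 => by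
    rcases f2_sq_of_nonneg (a := a) (A := A) (B := B) hx with h | h <;> rw [h0] at h <;>
      nlinarith [sq_pos_of_ne_zero hB]
  rcases lt_or_ge (ξ 0) 0 with h0 | h0 <;> rcases lt_or_ge (ξ 1) 0 with h1 | h1
  · simp [f1_of_neg h0, f1_of_neg h1] at h₁
  · simp only [f1_of_neg h0, f1_of_nonneg h1] at h₁ h₁₂
    exact f2_ne_zero h1 (by linear_combination h₁₂ - f2 a A B (ξ 1) * h₁)
  · simp only [f1_of_neg h1, f1_of_nonneg h0] at h₁ h₁₂
    exact f2_ne_zero h0 (by linear_combination h₁₂ - f2 a A B (ξ 0) * h₁)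
  · simp only [f1_of_nonneg h0, f1_of_nonneg h1, one_pow, mul_one, one_mul] at h₁ h₁₂
    rw [sum_two_mul_sq_eq_neg_mul h₁ h₁₂] at h₂
    exact sq_ne_mul_of_eq_sq_or_eq_sq hB hcond (f2_sq_of_nonneg h0) (f2_sq_of_nonneg h1)
      (by rw [← h₂]; ring)

theorem minimal_nodes_eq_three_general (a A B : ℝ) (ha : 0 < a) (hB : 0 < B)
    (hcond : A ^ 2 > 2 * a ^ 2 + B ^ 2) :
    IsLeast {m : ℕ | ∃ (ξ : Fin m → ℝ) (l : Fin m → ℝ),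
      (∀ j, ξ j ∈ Icc (-1:ℝ) 1) ∧
      ∀ f ∈ Submodule.span ℝ ({f1, f2 a A B} : Set (ℝ → ℝ)),
        (∫ x in (-1:ℝ)..1, (f x) ^ 2) = ∑ j, l j * (f (ξ j)) ^ 2} 3 := by
  refine ⟨⟨_, _, isExactQuadrature_three ha.ne'⟩, fun m ⟨ξ, l, h⟩ => ?_⟩
  by_contra! hm
  obtain ⟨ξ', l', h'⟩ := IsExactQuadrature.exists_of_le (n := 2) (by omega) h
  exact not_isExactQuadrature_two hB.ne' hcond ξ' l' h'

theorem minimal_nodes_eq_three (a A B : ℝ) (ha : 0 < a) (hAB : B < A) (hB : 0 < B)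
    (hcond : A ^ 2 > 2 * a ^ 2 + B ^ 2) :
    IsLeast {m : ℕ | ∃ (ξ : Fin m → ℝ) (l : Fin m → ℝ),
      (∀ j, ξ j ∈ Icc (-1:ℝ) 1) ∧
      ∀ f ∈ Submodule.span ℝ ({f1, f2 a A B} : Set (ℝ → ℝ)),
        (∫ x in (-1:ℝ)..1, (f x) ^ 2) = ∑ j, l j * (f (ξ j)) ^ 2} 3 :=
  minimal_nodes_eq_three_general a A B ha hB hcond
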